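/- Let B > 0 and let w, z be complex numbers with w ≠ 0, |log |w|| ≤ B, and |z/w − 1| ≤ 1/2. Then z ≠ 0 and |log |z|| ≤ B + 3/4. In particular, if φ_X is the model characteristic function of a triplet with λ ≤ Λ and σ ≤ Σ, and if sup_{|t| ≤ 1/h} |φ_emp(t) − φ_X(t)| ≤ (1/2) e^{−2Λ − Σ²/(2h²)}, then |log |φ_emp(t)|| ≤ 2Λ + Σ²/(2h²) + 3/4 for all |t| ≤ 1/h, so that the truncation at level M_n in the estimators is inactive once M_n exceeds this bound. -/

import Mathlib

open MeasureTheory ProbabilityTheory Filter Complex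

noncomputable section

/-- Characteristic function (Fourier transform) of a density `f`. -/
def charFun' (f : ℝ → ℝ) (t : ℝ) : ℂ :=
  ∫ x : ℝ, Complex.exp (Complex.I * t * x) * (f x : ℂ)

/-- Model characteristic function of one observation. -/
def phiX (γ σ lam : ℝ) (f : ℝ → ℝ) (t : ℝ) : ℂ :=
  Complex.exp (Complex.I * γ * t - (σ ^ 2 * t ^ 2) / 2 + lam * (charFun' f t - 1))

/-- Empirical characteristic function. -/
def phiEmp {Ω : Type*} {n : ℕ} (X : Fin n → Ω → ℝ) (ω : Ω) (t : ℝ) : ℂ :=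
  (n : ℂ)⁻¹ * ∑ j : Fin n, Complex.exp (Complex.I * t * (X j ω : ℂ))

/-- Bandwidth `h_n = (η log n)^{-1/2}`. -/
def bw (η : ℝ) (n : ℕ) : ℝ := (η * Real.log n) ^ (-(1 / 2) : ℝ)

/-- Truncation `max{min{M, x}, -M}`. -/
def trunc (M x : ℝ) : ℝ := max (min M x) (-M)

open Classical in
/-- Distinguished (continuous) logarithm of `g` on `[-T, T]`, normalized by `L 0 = 0`;
zero if no such continuous logarithm exists. -/
def distLog (g : ℝ → ℂ) (T : ℝ) : ℝ → ℂ :=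
  if h : ∃ L : ℝ → ℂ, ContinuousOn L (Set.Icc (-T) T) ∧ L 0 = 0 ∧
      ∀ t ∈ Set.Icc (-T) T, Complex.exp (L t) = g t
  then h.choose else fun _ => 0

/-- The estimator of `σ²`. -/
def sigmaTilde (η : ℝ) (m : ℕ → ℝ) (v : ℝ → ℝ) {Ω : Type*} {n : ℕ}
    (X : Fin n → Ω → ℝ) (ω : Ω) : ℝ :=
  ∫ t in (-(bw η n)⁻¹)..(bw η n)⁻¹,
    trunc (m n / bw η n ^ 2) (Real.log (‖phiEmp X ω t‖)) *
      (bw η n ^ 3 * v (bw η n * t))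

/-- The estimator of `λ`. -/
def lamTilde (η : ℝ) (m : ℕ → ℝ) (u : ℝ → ℝ) {Ω : Type*} {n : ℕ}
    (X : Fin n → Ω → ℝ) (ω : Ω) : ℝ :=
  ∫ t in (-(bw η n)⁻¹)..(bw η n)⁻¹,
    trunc (m n / bw η n ^ 2) (Real.log (‖phiEmp X ω t‖)) *
      (bw η n * u (bw η n * t))

/-- The estimator of `γ`. -/
def gammaTilde (η : ℝ) (m : ℕ → ℝ) (w : ℝ → ℝ) {Ω : Type*} {n : ℕ}
    (X : Fin n → Ω → ℝ) (ω : Ω) : ℝ :=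
  ∫ t in (-(bw η n)⁻¹)..(bw η n)⁻¹,
    trunc (m n / bw η n ^ 2) ((distLog (phiEmp X ω) (bw η n)⁻¹ t).im) *
      (bw η n ^ 2 * w (bw η n * t))

/-- The estimator of the L\'evy density `ρ`. -/
def rhoHat (η : ℝ) (m : ℕ → ℝ) (v u w : ℝ → ℝ) {Ω : Type*} {n : ℕ}
    (X : Fin n → Ω → ℝ) (ω : Ω) (x : ℝ) : ℂ :=
  (-Complex.I * (gammaTilde η m w X ω : ℝ)) * (2 * Real.pi : ℂ)⁻¹ *
      (∫ t in (-(bw η n)⁻¹)..(bw η n)⁻¹, Complex.exp (-Complex.I * t * x) * (t : ℂ)) +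
    (lamTilde η m u X ω : ℝ) * (2 * Real.pi : ℂ)⁻¹ *
      (∫ t in (-(bw η n)⁻¹)..(bw η n)⁻¹, Complex.exp (-Complex.I * t * x)) +
    ((sigmaTilde η m v X ω : ℝ) / 2) * (2 * Real.pi : ℂ)⁻¹ *
      (∫ t in (-(bw η n)⁻¹)..(bw η n)⁻¹, Complex.exp (-Complex.I * t * x) * (t : ℂ) ^ 2) +
    (2 * Real.pi : ℂ)⁻¹ *
      (∫ t in (-(bw η n)⁻¹)..(bw η n)⁻¹, Complex.exp (-Complex.I * t * x) *
        (trunc (m n / bw η n ^ 2) (Real.log (‖phiEmp X ω t‖)) : ℝ)) +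
    Complex.I * (2 * Real.pi : ℂ)⁻¹ *
      (∫ t in (-(bw η n)⁻¹)..(bw η n)⁻¹, Complex.exp (-Complex.I * t * x) *
        (trunc (m n / bw η n ^ 2) ((distLog (phiEmp X ω) (bw η n)⁻¹ t).im) : ℝ))

end

/-!
Since `log ‖z‖ - log ‖w‖ = log ‖z / w‖` and `‖z / w‖ ∈ [1/2, 3/2]`, the two logarithms differ by at
most `log 2 < 3/4`. For the model, `log ‖φ_X(t)‖ = -σ²t²/2 + λ(Re φ_f(t) - 1)` lies in
`[-B, 0]` with `B = 2Λ + Σ²/(2h²)` whenever `|t| ≤ 1/h`, so `‖φ_X(t)‖ ≥ e^{-B}` and the assumed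
uniform bound gives `‖φ_emp(t) / φ_X(t) - 1‖ ≤ 1/2`.
-/

lemma Real.abs_log_le_log_two_of_abs_sub_one_le {a : ℝ} (ha : |a - 1| ≤ 1 / 2) :
    |Real.log a| ≤ Real.log 2 := by
  obtain ⟨ha_lower, ha_upper⟩ := abs_le.mp ha
  have ha_pos : 0 < a := by linarith
  refine abs_le.mpr ⟨?_, Real.log_le_log ha_pos (by linarith)⟩
  rw [neg_le, ← Real.log_inv]
  exact Real.log_le_log (by positivity) ((inv_le_comm₀ ha_pos two_pos).mpr (by linarith))

section NormedField

variable {𝕜 : Type*} [NormedField 𝕜]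

lemma ne_zero_of_norm_div_sub_one_lt_one {z w : 𝕜} (h : ‖z / w - 1‖ < 1) : z ≠ 0 := by
  rintro rfl
  simp at h

lemma abs_log_norm_sub_log_norm_le {z w : 𝕜} (hw : w ≠ 0) (h : ‖z / w - 1‖ ≤ 1 / 2) :
    |Real.log ‖z‖ - Real.log ‖w‖| ≤ Real.log 2 := by
  have hz : z ≠ 0 := ne_zero_of_norm_div_sub_one_lt_one (h.trans_lt (by norm_num))
  rw [← Real.log_div (norm_ne_zero_iff.mpr hz) (norm_ne_zero_iff.mpr hw), ← norm_div]
  refine Real.abs_log_le_log_two_of_abs_sub_one_le ?_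
  simpa using (abs_norm_sub_norm_le (z / w) 1).trans h

lemma norm_div_sub_one_le_half {z w : 𝕜} (hw : w ≠ 0) (h : ‖z - w‖ ≤ ‖w‖ / 2) :
    ‖z / w - 1‖ ≤ 1 / 2 := by
  rwa [div_sub_one hw, norm_div, div_le_iff₀ (norm_pos_iff.mpr hw), one_div_mul_eq_div]

lemma ne_zero_and_abs_log_norm_le {z w : 𝕜} {B : ℝ} (hw : w ≠ 0) (hw_log : |Real.log ‖w‖| ≤ B)
    (h : ‖z / w - 1‖ ≤ 1 / 2) : z ≠ 0 ∧ |Real.log ‖z‖| ≤ B + 3 / 4 := by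
  refine ⟨ne_zero_of_norm_div_sub_one_lt_one (h.trans_lt (by norm_num)), ?_⟩
  have hlog_diff := abs_log_norm_sub_log_norm_le hw h
  linarith [abs_sub_abs_le_abs_sub (Real.log ‖z‖) (Real.log ‖w‖), Real.log_two_lt_d9]

end NormedField

lemma norm_charFun'_le_one {f : ℝ → ℝ} (hf : ∀ x, 0 ≤ f x) (hf_one : ∫ x, f x = 1) (t : ℝ) :
    ‖charFun' f t‖ ≤ 1 := by
  calc ‖charFun' f t‖ ≤ ∫ x : ℝ, ‖Complex.exp (Complex.I * t * x) * (f x : ℂ)‖ :=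
        norm_integral_le_integral_norm _
    _ = ∫ x, f x := by
        congr 1 with x
        rw [norm_mul, mul_assoc, ← Complex.ofReal_mul, Complex.norm_exp_I_mul_ofReal,
          Complex.norm_real, Real.norm_of_nonneg (hf x), one_mul]
    _ = 1 := hf_one

lemma log_norm_phiX (γ σ lam : ℝ) (f : ℝ → ℝ) (t : ℝ) :
    Real.log ‖phiX γ σ lam f t‖ = -(σ ^ 2 * t ^ 2) / 2 + lam * ((charFun' f t).re - 1) := by
  rw [phiX, Complex.norm_exp, Real.log_exp]
  simp only [← Complex.ofReal_pow, Complex.add_re, Complex.sub_re, Complex.mul_re, Complex.I_re,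
    Complex.I_im, Complex.ofReal_re, Complex.ofReal_im, Complex.div_ofNat_re, Complex.one_re]
  ring

lemma abs_log_norm_phiX_le {γ σ lam : ℝ} {f : ℝ → ℝ} (hlam : 0 ≤ lam) (t : ℝ)
    (hf : ‖charFun' f t‖ ≤ 1) :
    |Real.log ‖phiX γ σ lam f t‖| ≤ 2 * lam + σ ^ 2 * t ^ 2 / 2 := by
  obtain ⟨hre_lower, hre_upper⟩ := abs_le.mp ((Complex.abs_re_le_norm _).trans hf)
  rw [log_norm_phiX, abs_le]
  constructor <;> nlinarith [sq_nonneg (σ * t)]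

theorem log_abs_stability :
    (∀ (B : ℝ) (w z : ℂ), 0 < B → w ≠ 0 → |Real.log (‖w‖)| ≤ B →
      ‖z / w - 1‖ ≤ 1 / 2 →
      z ≠ 0 ∧ |Real.log (‖z‖)| ≤ B + 3 / 4) ∧
    (∀ (γ σ lam Λ Sig h : ℝ) (f : ℝ → ℝ) (n : ℕ) (Ω : Type) (X : Fin n → Ω → ℝ) (ω : Ω),
      0 < σ → σ ≤ Sig → 0 < lam → lam ≤ Λ → 0 < h →
      (∀ x, 0 ≤ f x) → MeasureTheory.Integrable f → (∫ x : ℝ, f x) = 1 →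
      (∀ t : ℝ, |t| ≤ h⁻¹ →
        ‖phiEmp X ω t - phiX γ σ lam f t‖ ≤
          (1 / 2) * Real.exp (-2 * Λ - Sig ^ 2 / (2 * h ^ 2))) →
      ∀ t : ℝ, |t| ≤ h⁻¹ →
        |Real.log (‖phiEmp X ω t‖)| ≤ 2 * Λ + Sig ^ 2 / (2 * h ^ 2) + 3 / 4) := by
  refine ⟨fun B w z _ hw hw_log h => ne_zero_and_abs_log_norm_le hw hw_log h, ?_⟩
  intro γ σ lam Λ Sig h f n Ω X ω hσ hσ_le hlam hlam_le _ hf _ hf_one hclose t ht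
  set B := 2 * Λ + Sig ^ 2 / (2 * h ^ 2)
  set w := phiX γ σ lam f t
  have hw : w ≠ 0 := Complex.exp_ne_zero _
  have hσt : σ ^ 2 * t ^ 2 / 2 ≤ Sig ^ 2 / (2 * h ^ 2) := by
    rw [mul_comm 2, ← div_div, div_eq_mul_inv (Sig ^ 2), ← inv_pow, ← sq_abs t]
    gcongr
  have hw_log : |Real.log ‖w‖| ≤ B := by
    have : |Real.log ‖w‖| ≤ 2 * lam + σ ^ 2 * t ^ 2 / 2 :=
      abs_log_norm_phiX_le hlam.le t (norm_charFun'_le_one hf hf_one t)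
    linarith
  have hw_lower : Real.exp (-B) ≤ ‖w‖ := by
    rw [← Real.exp_log (norm_pos_iff.mpr hw)]
    exact Real.exp_le_exp.mpr (neg_le_of_abs_le hw_log)
  have hratio : ‖phiEmp X ω t / w - 1‖ ≤ 1 / 2 := by
    refine norm_div_sub_one_le_half hw ((hclose t ht).trans ?_)
    rw [show -2 * Λ - Sig ^ 2 / (2 * h ^ 2) = -B by ring]
    linarith
  exact (ne_zero_and_abs_log_norm_le hw hw_log hratio).2
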